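/- Let $\lambda : A \times A \to (M, *)$ be a hermitian form, and let $(\lambda', \mu')$ be a quadratic form on an abelian group $A'$ with values in a commutative quadratic group $(M'_e, M'_{ee}, h', p')$. Suppose $\alpha : A \to A'$ and $\beta_{ee} : M \to M'_{ee}$ are group homomorphisms such that $\beta_{ee}(m^*) = h'(p'(\beta_{ee}(m))) - \beta_{ee}(m)$ for all $m \in M$ and $\lambda'(\alpha(a_1), \alpha(a_2)) = \beta_{ee}(\lambda(a_1, a_2))$ for all $a_1, a_2 \in A$. Then there exists a unique group homomorphism $\beta_e : M^c_e \to M'_e$ such that $h' \circ \beta_e = \beta_{ee} \circ h^c$ (where $h^c$ is the homomorphism induced by $h_\lambda$ on the quotient), $\beta_e \circ p^c = p' \circ \beta_{ee}$, and $\beta_e \circ \mu^c = \mu' \circ \alpha$. -/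

import Mathlib

/-!
The homomorphism `M ×_λ A → M'_e`, `(m, a) ↦ p'(β_ee m) + μ'(α a)`, is additive because the
defect `p' ∘ λ'` of `μ'` cancels the twist `-λ(a, a')` of the group law. It kills the relations
`(m^*, -a) - (m, a)`: in a commutative quadratic group `p' ∘ h' = 2`, which forces
`μ'(-a) = μ'(a)` and `p'(β_ee(m^*)) = p'(β_ee m)`. It therefore descends to `M^c_e`, and it is
unique because `(m, a) = (m, 0) + (0, a)` in `M ×_λ A`.
-/

namespace CST

/-- The normal closure of a set in an additive group: the smallest normal
subgroup containing the set. -/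
def nclosure {G : Type*} [AddGroup G] (s : Set G) : AddSubgroup G :=
  sInf {N : AddSubgroup G | N.Normal ∧ s ⊆ N}

instance nclosure_normal {G : Type*} [AddGroup G] (s : Set G) :
    (nclosure s).Normal := by
  constructor
  intro n hn g
  rw [nclosure, AddSubgroup.mem_sInf] at hn ⊢
  intro N hN
  exact hN.1.conj_mem n (hn N hN) g

variable {A M : Type*} [AddCommGroup A] [AddCommGroup M]

/-- The underlying type of the central extension `M ×_lam A` determined by a
bilinear map `lam : A × A → M`. -/
def Ext (lam : A →+ A →+ M) : Type _ := M × A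

namespace Ext

variable (lam : A →+ A →+ M)

/-- The element of `M ×_lam A` given by the pair `(m, a)`. -/
def mkE (m : M) (a : A) : Ext lam := (m, a)

instance : Add (Ext lam) :=
  ⟨fun x y => (x.1 + y.1 - lam x.2 y.2, x.2 + y.2)⟩

instance : Zero (Ext lam) := ⟨((0 : M), (0 : A))⟩

instance : Neg (Ext lam) :=
  ⟨fun x => (-x.1 - lam x.2 x.2, -x.2)⟩

theorem add_def (x y : Ext lam) :
    x + y = (x.1 + y.1 - lam x.2 y.2, x.2 + y.2) := rfl

theorem zero_def : (0 : Ext lam) = ((0 : M), (0 : A)) := rfl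

theorem neg_def (x : Ext lam) : -x = (-x.1 - lam x.2 x.2, -x.2) := rfl

/-- The operation `(m, a) + (m', a') = (m + m' - lam a a', a + a')` makes
`M ×_lam A` into a group. -/
instance : AddGroup (Ext lam) :=
  AddGroup.ofLeftAxioms
    (by
      intro x y z
      show @Eq (M × A) ((x.1 + y.1 - lam x.2 y.2) + z.1 - lam (x.2 + y.2) z.2, (x.2 + y.2) + z.2)
        (x.1 + (y.1 + z.1 - lam y.2 z.2) - lam x.2 (y.2 + z.2), x.2 + (y.2 + z.2))
      simp only [map_add, AddMonoidHom.add_apply, map_zero]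
      refine Prod.ext ?_ ?_ <;> simp <;> try abel)
    (by
      intro x
      show @Eq (M × A) (0 + x.1 - lam 0 x.2, 0 + x.2) x
      simp only [map_zero, AddMonoidHom.zero_apply]
      refine Prod.ext ?_ ?_ <;> simp)
    (by
      intro x
      show @Eq (M × A) ((-x.1 - lam x.2 x.2) + x.1 - lam (-x.2) x.2, -x.2 + x.2) (0, 0)
      simp only [map_neg, AddMonoidHom.neg_apply]
      refine Prod.ext ?_ ?_ <;> simp <;> try abel)

/-- The function `h_lam (m, a) = m + m^* + lam a a`. -/
def hfun (star : M →+ M) : Ext lam → M :=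
  fun x => x.1 + star x.1 + lam x.2 x.2

/-- The function `p_lam m = (m, 0)`. -/
def pfun : M → Ext lam := fun m => mkE lam m 0

/-- The function `mu_lam a = (0, a)`. -/
def mufun : A → Ext lam := fun a => mkE lam 0 a

/-- The set of relations `(m^*, -a) - (m, a)` in `M ×_lam A`. -/
def relSet (star : M →+ M) : Set (Ext lam) :=
  {x | ∃ (m : M) (a : A), x = mkE lam (star m) (-a) - mkE lam m a}

end Ext

open Ext

theorem nclosure_le {G : Type*} [AddGroup G] {s : Set G} {N : AddSubgroup G} [N.Normal]
    (hs : s ⊆ N) : nclosure s ≤ N :=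
  sInf_le ⟨inferInstance, hs⟩

section QuadraticForm

variable {A' Me Mee : Type*} [AddCommGroup A'] [AddCommGroup Me] [AddCommGroup Mee]
  {p : Mee →+ Me} {lam' : A' →+ A' →+ Mee} {mu : A' → Me}

theorem quadraticForm_map_zero
    (mu_add : ∀ a a' : A', mu (a + a') = mu a + mu a' + p (lam' a a')) : mu 0 = 0 := by
  simpa using mu_add 0 0

theorem quadraticForm_map_neg {h : Me →+ Mee} (ph : ∀ x : Me, p (h x) = 2 • x)
    (mu_add : ∀ a a' : A', mu (a + a') = mu a + mu a' + p (lam' a a'))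
    (h_mu : ∀ a : A', h (mu a) = lam' a a) (a : A') : mu (-a) = mu a := by
  have hsum := mu_add a (-a)
  simp only [add_neg_cancel, quadraticForm_map_zero mu_add, map_neg, ← h_mu, ph,
    two_smul] at hsum
  calc mu (-a) = mu a + mu (-a) + -(mu a + mu a) + mu a := by abel
    _ = mu a := by rw [← hsum, zero_add]

end QuadraticForm

namespace Ext

variable {G : Type*} [AddCommGroup G] {lam : A →+ A →+ M}

theorem mkE_eq_add (m : M) (a : A) : mkE lam m a = mkE lam m 0 + mkE lam 0 a :=
  show (m, a) = (m + 0 - lam 0 a, 0 + a) by simp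

def lift (f : M →+ G) (q : A → G) (hq : ∀ a a' : A, q (a + a') = q a + q a' + f (lam a a')) :
    Ext lam →+ G :=
  AddMonoidHom.mk' (fun x => f x.1 + q x.2) fun x y => by
    simp only [add_def, map_add, map_sub, hq]
    abel

variable (f : M →+ G) (q : A → G) (hq : ∀ a a' : A, q (a + a') = q a + q a' + f (lam a a'))

theorem lift_mkE (m : M) (a : A) : lift f q hq (mkE lam m a) = f m + q a := rfl

theorem nclosure_relSet_le_ker_lift {star : M →+ M} (hf : ∀ m : M, f (star m) = f m)
    (hq_neg : ∀ a : A, q (-a) = q a) : nclosure (relSet lam star) ≤ (lift f q hq).ker := by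
  refine nclosure_le ?_
  rintro _ ⟨m, a, rfl⟩
  rw [SetLike.mem_coe, AddMonoidHom.mem_ker, map_sub, lift_mkE, lift_mkE, hf, hq_neg, sub_self]

theorem quotient_hom_ext {N : AddSubgroup (Ext lam)} [N.Normal] {φ ψ : Ext lam ⧸ N →+ G}
    (hM : ∀ m : M, φ (mkE lam m 0 : Ext lam) = ψ (mkE lam m 0 : Ext lam))
    (hA : ∀ a : A, φ (mkE lam 0 a : Ext lam) = ψ (mkE lam 0 a : Ext lam)) : φ = ψ := by
  ext ⟨m, a⟩
  change φ (mkE lam m a : Ext lam) = ψ (mkE lam m a : Ext lam)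
  rw [mkE_eq_add, QuotientAddGroup.mk_add, map_add, map_add, hM, hA]

end Ext

open Ext

theorem universal_commutative_quadratic_refinement_general
    {A' Me' Mee' : Type*} [AddCommGroup A'] [AddCommGroup Me'] [AddCommGroup Mee']
    (lam : A →+ A →+ M) (star : M →+ M)
    (h' : Me' →+ Mee') (p' : Mee' →+ Me')
    (ph' : ∀ x : Me', p' (h' x) = 2 • x)
    (lam' : A' →+ A' →+ Mee') (mu' : A' → Me')
    (mu'_add : ∀ a a' : A', mu' (a + a') = mu' a + mu' a' + p' (lam' a a'))
    (h'_mu' : ∀ a : A', h' (mu' a) = lam' a a)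
    (alpha : A →+ A') (bee : M →+ Mee')
    (bee_star : ∀ m : M, bee (star m) = h' (p' (bee m)) - bee m)
    (bee_lam : ∀ a1 a2 : A, lam' (alpha a1) (alpha a2) = bee (lam a1 a2)) :
    ∃! be : (Ext lam ⧸ nclosure (relSet lam star)) →+ Me',
      (∀ (m : M) (a : A),
        h' (be (QuotientAddGroup.mk (mkE lam m a))) = bee (m + star m + lam a a)) ∧
      (∀ m : M, be (QuotientAddGroup.mk (mkE lam m 0)) = p' (bee m)) ∧
      (∀ a : A, be (QuotientAddGroup.mk (mkE lam 0 a)) = mu' (alpha a)) := by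
  have mu'_zero := quadraticForm_map_zero mu'_add
  have mu'_alpha_add : ∀ a a' : A, mu' (alpha (a + a')) = mu' (alpha a) + mu' (alpha a') +
      (p'.comp bee) (lam a a') := by
    simp [mu'_add, bee_lam]
  have p'_bee_star : ∀ m : M, p' (bee (star m)) = p' (bee m) := by
    simp [bee_star, ph', two_smul]
  have hker := nclosure_relSet_le_ker_lift (star := star) (p'.comp bee) (mu' ∘ alpha)
    mu'_alpha_add p'_bee_star
    fun a => by simp [quadraticForm_map_neg ph' mu'_add h'_mu']
  refine ⟨QuotientAddGroup.lift _ _ hker, ⟨fun m a => ?_, fun m => ?_, fun a => ?_⟩, ?_⟩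
  · simp [lift_mkE, h'_mu', bee_lam, bee_star]
  · simp [lift_mkE, mu'_zero]
  · simp [lift_mkE]
  · rintro be ⟨-, hp, hmu⟩
    exact quotient_hom_ext (fun m => by simp [hp, lift_mkE, mu'_zero])
      fun a => by simp [hmu, lift_mkE]

/-- Universal property of the commutative quadratic refinement
`(lam, mu^c) : A → (M^c_e, M, h^c, p^c)` among quadratic forms with values in
commutative quadratic groups. -/
theorem universal_commutative_quadratic_refinement
    {A' Me' Mee' : Type*} [AddCommGroup A'] [AddCommGroup Me'] [AddCommGroup Mee']
    (lam : A →+ A →+ M) (star : M →+ M)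
    (star_star : ∀ m : M, star (star m) = m)
    (herm : ∀ a a' : A, lam a' a = star (lam a a'))
    (h' : Me' →+ Mee') (p' : Mee' →+ Me')
    (hph' : ∀ x : Me', h' (p' (h' x)) = 2 • h' x)
    (ph' : ∀ x : Me', p' (h' x) = 2 • x)
    (lam' : A' →+ A' →+ Mee') (mu' : A' → Me')
    (mu'_add : ∀ a a' : A', mu' (a + a') = mu' a + mu' a' + p' (lam' a a'))
    (h'_mu' : ∀ a : A', h' (mu' a) = lam' a a)
    (alpha : A →+ A') (bee : M →+ Mee')
    (bee_star : ∀ m : M, bee (star m) = h' (p' (bee m)) - bee m)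
    (bee_lam : ∀ a1 a2 : A, lam' (alpha a1) (alpha a2) = bee (lam a1 a2)) :
    ∃! be : (Ext lam ⧸ nclosure (relSet lam star)) →+ Me',
      (∀ (m : M) (a : A),
        h' (be (QuotientAddGroup.mk (mkE lam m a))) = bee (m + star m + lam a a)) ∧
      (∀ m : M, be (QuotientAddGroup.mk (mkE lam m 0)) = p' (bee m)) ∧
      (∀ a : A, be (QuotientAddGroup.mk (mkE lam 0 a)) = mu' (alpha a)) :=
  universal_commutative_quadratic_refinement_general lam star h' p' ph' lam' mu' mu'_add h'_mu'
    alpha bee bee_star bee_lam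

end CST
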